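/- Fix N ≥ 1 and a matrix P : Fin N → Fin N → ℝ with 0 ≤ P i j ≤ 1 and P j i = 1 − P i j for all i, j, and suppose P is strongly stochastically transitive with respect to an ordering π. Let θ* : Fin N → ℝ satisfy the uniform-matchmaking stationarity condition of the population Bradley–Terry negative log-likelihood: ∑_j (P i j − σ(θ*_i − θ*_j)) = 0 for every i, where σ(x) = 1/(1+e^{−x}). Then θ* ranks players consistently with π: for all i, j with π(i) > π(j), θ*_i ≥ θ*_j. That is, under uniform matchmaking the population Elo/Bradley–Terry MLE recovers the true SST ranking. -/

import Mathlib

/-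
A stationary point equates each player's expected score `∑ k, σ(θ i - θ k)` with the player's
row sum `∑ k, P i k`. The expected score is strictly increasing in `θ i`, and strong stochastic
transitivity makes row sums monotone along `π`, so `θ` must be monotone along `π` as well.
-/

/-- The logistic function `σ(x) = 1 / (1 + e^{-x})`. -/
noncomputable def logistic (x : ℝ) : ℝ := 1 / (1 + Real.exp (-x))

lemma logistic_eq_sigmoid : logistic = Real.sigmoid := by
  funext x
  simp [logistic, Real.sigmoid]

lemma logistic_strictMono : StrictMono logistic :=
  logistic_eq_sigmoid ▸ Real.sigmoid_strictMono

lemma strictMono_sum_logistic_sub {ι : Type*} [Fintype ι] [Nonempty ι] (θ : ι → ℝ) :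
    StrictMono fun x => ∑ k, logistic (x - θ k) := fun _ _ hxy =>
  Finset.sum_lt_sum_of_nonempty Finset.univ_nonempty fun _ _ =>
    logistic_strictMono (sub_lt_sub_right hxy _)

theorem elo_mle_recovers_sst_ranking_general
    (N : ℕ)
    (P : Fin N → Fin N → ℝ)
    (π : Equiv.Perm (Fin N))
    (hSST : ∀ i j, π j < π i → ∀ k, P j k ≤ P i k)
    (θ : Fin N → ℝ)
    (hstat : ∀ i, ∑ j, (P i j - logistic (θ i - θ j)) = 0) :
    ∀ i j, π j < π i → θ j ≤ θ i := by
  intro i j hij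
  have : Nonempty (Fin N) := ⟨i⟩
  have score_eq_rowSum (l : Fin N) : ∑ k, logistic (θ l - θ k) = ∑ k, P l k := by
    have h := hstat l
    rw [Finset.sum_sub_distrib, sub_eq_zero] at h
    exact h.symm
  refine (strictMono_sum_logistic_sub θ).le_iff_le.mp ?_
  simp only [score_eq_rowSum]
  exact Finset.sum_le_sum fun k _ => hSST i j hij k

/-- Under uniform matchmaking, a stationary point `θ` of the population Bradley–Terry
negative log-likelihood (i.e. `∑ j, (P i j - σ(θ i - θ j)) = 0` for all `i`) on a strongly
stochastically transitive matrix `P` ranks players consistently with the true ordering `π`: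
`π i > π j → θ i ≥ θ j`. -/
theorem elo_mle_recovers_sst_ranking
    (N : ℕ) (hN : 1 ≤ N)
    (P : Fin N → Fin N → ℝ)
    (hP0 : ∀ i j, 0 ≤ P i j) (hP1 : ∀ i j, P i j ≤ 1)
    (hPskew : ∀ i j, P j i = 1 - P i j)
    (π : Equiv.Perm (Fin N))
    (hSST : ∀ i j, π j < π i → ∀ k, P j k ≤ P i k)
    (θ : Fin N → ℝ)
    (hstat : ∀ i, ∑ j, (P i j - logistic (θ i - θ j)) = 0) :
    ∀ i j, π j < π i → θ j ≤ θ i :=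
  elo_mle_recovers_sst_ranking_general N P π hSST θ hstat
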